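/- arXiv:1910.01356 — 4 statements merged into one kernel-verified Lean document; each statement's English description precedes it below -/
import Mathlib

section
/- Let Δ > 0 and let G be a finite simple Δ-regular graph of order n. Then a_3(G) ≥ 2n/(Δ + 1). -/
/-- A graph is a linear `k`-forest if it is a forest in which every connected component
is a path with at most `k` edges: equivalently, it is acyclic, no vertex has three
distinct neighbours, and every path in it has length at most `k`. -/
def SimpleGraph.IsLinearForest {α : Type*} (k : ℕ) (H : SimpleGraph α) : Prop :=
  H.IsAcyclic ∧
  (∀ v a b c : α, H.Adj v a → H.Adj v b → H.Adj v c → a = b ∨ a = c ∨ b = c) ∧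
  (∀ (u v : α) (p : H.Walk u v), p.IsPath → p.length ≤ k)

/-!
By Lovász's partition lemma, the vertices of a `Δ`-regular graph split into classes `A_i` whose
induced subgraphs have maximum degree `d_i ∈ {1, 2}`, with `∑ (d_i + 1) = Δ + 1`. A class of
maximum degree `1` induces a linear forest. A class of maximum degree `2` is a union of paths and
cycles, and greedily keeping an induced path on at most four vertices while discarding its
neighbourhood (at most `3/2` times as many vertices) yields an induced linear `3`-forest on at
least `2/3` of the class. Hence `2 n = ∑ 2 |A_i| ≤ ∑ (d_i + 1) |T_i| ≤ (Δ + 1) max |T_i|`.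
Induced linear `3`-forests are certified by injective homomorphisms into a disjoint union of
paths with three edges.
-/

theorem Finset.exists_eq_pair_of_card_eq_two {α : Type*} [DecidableEq α] {s : Finset α}
    {x : α} (h : s.card = 2) (hx : x ∈ s) : ∃ y, y ≠ x ∧ s = {x, y} := by
  obtain ⟨a, b, hab, rfl⟩ := Finset.card_eq_two.1 h
  rcases Finset.mem_insert.1 hx with rfl | hx
  · exact ⟨b, hab.symm, rfl⟩
  · rw [Finset.mem_singleton.1 hx]
    exact ⟨a, hab, Finset.pair_comm _ _⟩

theorem Fintype.sum_apply_update {α ι M : Type*} [Fintype α] [DecidableEq α] [AddCommGroup M]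
    (f : ι → M) (c : α → ι) (a : α) (j : ι) :
    ∑ u, f (Function.update c a j u) = ∑ u, f (c u) + (f j - f (c a)) := by
  rw [← Finset.add_sum_erase _ _ (Finset.mem_univ a),
    ← Finset.add_sum_erase _ _ (Finset.mem_univ a),
    Finset.sum_congr rfl fun u hu => by rw [Function.update_of_ne (Finset.ne_of_mem_erase hu)]]
  simp only [Function.update_self]
  abel

namespace SimpleGraph

section LinearForest

variable {α β : Type*} {H : SimpleGraph α} {H' : SimpleGraph β} {k : ℕ}

theorem IsLinearForest.comap (f : H →g H') (hf : Function.Injective f)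
    (h : H'.IsLinearForest k) : H.IsLinearForest k := by
  refine ⟨h.1.comap f hf, fun v a b c ha hb hc => ?_, fun u v p hp => ?_⟩
  · simpa only [hf.eq_iff] using h.2.1 _ _ _ _ (f.map_adj ha) (f.map_adj hb) (f.map_adj hc)
  · simpa using h.2.2 _ _ (p.map f) (hp.map hf)

theorem isLinearForest_of_adj_eq (hk : 1 ≤ k) (h : ∀ v a b, H.Adj v a → H.Adj v b → a = b) :
    H.IsLinearForest k := by
  refine ⟨fun u c hc => ?_, fun v a b c ha hb _ => .inl (h v a b ha hb), fun u v p hp => ?_⟩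
  · exact hc.snd_ne_penultimate (h u _ _ (Walk.adj_snd hc.not_nil)
      (Walk.adj_penultimate hc.not_nil).symm)
  · match p, hp with
    | .nil, _ => simp
    | .cons _ .nil, _ => simp [hk]
    | .cons hua (.cons hab q), hp =>
      obtain rfl := h _ _ _ hua.symm hab
      simp [Walk.cons_isPath_iff] at hp

theorem isAcyclic_of_adj_lt_eq [LinearOrder α]
    (h : ∀ v a b, H.Adj v a → H.Adj v b → a < v → b < v → a = b) : H.IsAcyclic := by
  intro u c hc
  -- the largest vertex `v` of the cycle has two distinct smaller neighbours on it
  obtain ⟨v, hv, hmax⟩ := c.support.toFinset.exists_max_image id ⟨u, by simp⟩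
  rw [List.mem_toFinset] at hv
  have hc' := hc.rotate hv
  have hlt : ∀ a ∈ (c.rotate v hv).support, H.Adj v a → a < v := fun a ha hadj =>
    lt_of_le_of_ne (hmax a (by simpa using ha)) hadj.ne.symm
  exact hc'.snd_ne_penultimate (h v _ _ (Walk.adj_snd hc'.not_nil)
    (Walk.adj_penultimate hc'.not_nil).symm
    (hlt _ (Walk.getVert_mem_support _ _) (Walk.adj_snd hc'.not_nil))
    (hlt _ (Walk.getVert_mem_support _ _) (Walk.adj_penultimate hc'.not_nil).symm))

end LinearForest

/-- The disjoint union of the paths `(k + 1) b, (k + 1) b + 1, …, (k + 1) b + k`, `b ∈ ℕ`. -/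
def blockPathGraph (k : ℕ) : SimpleGraph ℕ where
  Adj i j := (i + 1 = j ∨ j + 1 = i) ∧ i / (k + 1) = j / (k + 1)
  symm := ⟨fun _ _ h => ⟨h.1.symm, h.2.symm⟩⟩
  loopless := ⟨fun _ h => by omega⟩

theorem blockPathGraph_adj {k i j : ℕ} :
    (blockPathGraph k).Adj i j ↔ (i + 1 = j ∨ j + 1 = i) ∧ i / (k + 1) = j / (k + 1) :=
  .rfl

theorem Walk.div_eq_of_mem_support_blockPathGraph {k u v : ℕ} (p : (blockPathGraph k).Walk u v) :
    ∀ x ∈ p.support, x / (k + 1) = u / (k + 1) := by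
  induction p with
  | nil => simp
  | cons h _ ih =>
    simp only [Walk.support_cons, List.mem_cons, forall_eq_or_imp, true_and]
    exact fun x hx => (ih x hx).trans h.2.symm

theorem blockPathGraph_isLinearForest (k : ℕ) : (blockPathGraph k).IsLinearForest k := by
  refine ⟨isAcyclic_of_adj_lt_eq fun v a b ha hb _ _ => ?_, fun v a b c ha hb hc => ?_,
    fun u v p hp => ?_⟩
  · rw [blockPathGraph_adj] at ha hb; omega
  · rw [blockPathGraph_adj] at ha hb hc; omega
  · have hinj : Set.InjOn (· % (k + 1)) {x | x ∈ p.support} := fun x hx y hy hxy => by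
      rw [← Nat.div_add_mod x (k + 1), ← Nat.div_add_mod y (k + 1),
        p.div_eq_of_mem_support_blockPathGraph x hx, p.div_eq_of_mem_support_blockPathGraph y hy]
      simp_all
    have := Finset.card_le_card_of_injOn (· % (k + 1)) (s := p.support.toFinset)
      (t := Finset.range (k + 1)) (fun x _ => by simpa using Nat.mod_lt x k.succ_pos)
      (by simpa using hinj)
    rw [List.toFinset_card_of_nodup hp.support_nodup, Walk.length_support] at this
    simpa using this

theorem blockPathGraph_adj_add_self {k i j : ℕ} :
    (blockPathGraph k).Adj (i + (k + 1)) (j + (k + 1)) ↔ (blockPathGraph k).Adj i j := by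
  rw [blockPathGraph_adj, blockPathGraph_adj, Nat.add_div_right _ (by omega),
    Nat.add_div_right _ (by omega)]
  omega

variable {V : Type*} {G : SimpleGraph V} {k : ℕ}

def IsBlockLayout (G : SimpleGraph V) (k : ℕ) (s : Finset V) (π : V → ℕ) : Prop :=
  Set.InjOn π s ∧ ∀ x ∈ s, ∀ y ∈ s, G.Adj x y → (blockPathGraph k).Adj (π x) (π y)

theorem IsBlockLayout.isLinearForest {s : Finset V} {π : V → ℕ} (h : IsBlockLayout G k s π) :
    (G.induce (s : Set V)).IsLinearForest k :=
  (blockPathGraph_isLinearForest k).comap ⟨fun x => π x, fun {x y} hxy => h.2 x x.2 y y.2 hxy⟩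
    fun x y hxy => Subtype.ext (h.1 x.2 y.2 hxy)

theorem IsBlockLayout.union_shift [DecidableEq V] {K T : Finset V} {σ π : V → ℕ}
    (hK : IsBlockLayout G k K σ) (hσ : ∀ x ∈ K, σ x ≤ k) (hT : IsBlockLayout G k T π)
    (hsep : ∀ x ∈ K, ∀ y ∈ T, ¬ G.Adj x y) :
    IsBlockLayout G k (K ∪ T) (fun x => if x ∈ K then σ x else π x + (k + 1)) := by
  constructor
  · intro x hx y hy hxy
    simp only [Finset.coe_union, Set.mem_union, Finset.mem_coe] at hx hy
    by_cases hxK : x ∈ K <;> by_cases hyK : y ∈ K <;>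
      simp only [hxK, hyK, if_true, if_false] at hxy
    · exact hK.1 hxK hyK hxy
    · have := hσ x hxK; omega
    · have := hσ y hyK; omega
    · exact hT.1 (hx.resolve_left hxK) (hy.resolve_left hyK) (by omega)
  · intro x hx y hy hxy
    simp only [Finset.mem_union] at hx hy
    by_cases hxK : x ∈ K <;> by_cases hyK : y ∈ K <;> simp only [hxK, hyK, if_true, if_false]
    · exact hK.2 x hxK y hyK hxy
    · exact absurd hxy (hsep x hxK y (hy.resolve_left hyK))
    · exact absurd hxy.symm (hsep y hyK x (hx.resolve_left hxK))
    · exact blockPathGraph_adj_add_self.2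
        (hT.2 x (hx.resolve_left hxK) y (hy.resolve_left hyK) hxy)

def ChordFree (G : SimpleGraph V) (l : List V) : Prop :=
  ∀ i j (hi : i < l.length) (hj : j < l.length), i + 1 < j → ¬ G.Adj l[i] l[j]

theorem ChordFree.isBlockLayout [DecidableEq V] {l : List V} (hl : G.ChordFree l)
    (hlen : l.length ≤ k + 1) : IsBlockLayout G k l.toFinset (fun x => l.idxOf x) := by
  refine ⟨fun x hx y _ hxy => (List.idxOf_inj (by simpa using hx)).1 hxy,
    fun x hx y hy hxy => ?_⟩
  simp only [List.mem_toFinset] at hx hy ⊢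
  have hi := List.idxOf_lt_length_of_mem hx
  have hj := List.idxOf_lt_length_of_mem hy
  rw [← List.getElem_idxOf hi, ← List.getElem_idxOf hj] at hxy
  refine ⟨?_, by rw [Nat.div_eq_of_lt (by omega), Nat.div_eq_of_lt (by omega)]⟩
  by_contra hne
  rcases Nat.lt_trichotomy (l.idxOf x) (l.idxOf y) with h | h | h
  · exact hl _ _ hi hj (by omega) hxy
  · simp only [h] at hxy; exact G.irrefl hxy
  · exact hl _ _ hj hi (by omega) hxy.symm

section Greedy

variable [Fintype V] [DecidableEq V] [DecidableRel G.Adj]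

/-- A greedy step keeps the vertices of `l` and discards `R`, which contains their closed
neighbourhood in `A`. -/
structure IsGreedyPiece (G : SimpleGraph V) [DecidableRel G.Adj] (A R : Finset V) (l : List V) :
    Prop where
  ne_nil : l ≠ []
  nodup : l.Nodup
  length_le : l.length ≤ 4
  chordFree : G.ChordFree l
  mem : ∀ x ∈ l, x ∈ A ∧ x ∈ R
  neighborFinset_inter_subset : ∀ x ∈ l, G.neighborFinset x ∩ A ⊆ R
  card_le : 2 * R.card ≤ 3 * l.length

theorem IsGreedyPiece.exists_blockLayout {A R T : Finset V} {l : List V} {π : V → ℕ}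
    (hl : IsGreedyPiece G A R l) (hT : T ⊆ A \ R) (hπ : IsBlockLayout G 3 T π)
    (hcard : 2 * (A \ R).card ≤ 3 * T.card) :
    ∃ T' ⊆ A, ∃ π' : V → ℕ, IsBlockLayout G 3 T' π' ∧ 2 * A.card ≤ 3 * T'.card := by
  have hsep : ∀ x ∈ l.toFinset, ∀ y ∈ T, ¬ G.Adj x y := fun x hx y hy hxy => by
    rw [List.mem_toFinset] at hx
    have hy' := Finset.mem_sdiff.1 (hT hy)
    exact hy'.2 (hl.neighborFinset_inter_subset x hx (by simp [hxy, hy'.1]))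
  have hdisj : Disjoint l.toFinset T := Finset.disjoint_left.2 fun x hx hxT =>
    (Finset.mem_sdiff.1 (hT hxT)).2 (hl.mem x (List.mem_toFinset.1 hx)).2
  refine ⟨l.toFinset ∪ T, Finset.union_subset (fun x hx => (hl.mem x (by simpa using hx)).1)
      (hT.trans Finset.sdiff_subset), _,
    (hl.chordFree.isBlockLayout hl.length_le).union_shift
      (fun x hx => Nat.le_of_lt_succ
        ((List.idxOf_lt_length_of_mem (List.mem_toFinset.1 hx)).trans_le hl.length_le))
      hπ hsep, ?_⟩
  rw [Finset.card_union_of_disjoint hdisj, List.toFinset_card_of_nodup hl.nodup]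
  have := Finset.card_le_card_sdiff_add_card (s := A) (t := R)
  have := hl.card_le
  omega

theorem mem_neighborFinset_inter {A : Finset V} {x y : V} :
    y ∈ G.neighborFinset x ∩ A ↔ G.Adj x y ∧ y ∈ A := by
  simp

theorem isGreedyPiece_singleton {A : Finset V} {v : V} (hv : v ∈ A)
    (h : G.neighborFinset v ∩ A = ∅) : IsGreedyPiece G A {v} [v] where
  ne_nil := by simp
  nodup := by simp
  length_le := by simp
  chordFree _ _ _ hj h := by simp at hj; omega
  mem := by simp [hv]
  neighborFinset_inter_subset := by simp [h]
  card_le := by simp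

theorem isGreedyPiece_edge {A : Finset V} {u v : V} (hv : v ∈ A) (hu : u ∈ A) (huv : G.Adj v u)
    (hsub : G.neighborFinset v ∩ A ⊆ insert u (G.neighborFinset u ∩ A))
    (hcard : (G.neighborFinset u ∩ A).card ≤ 2) :
    IsGreedyPiece G A (insert u (G.neighborFinset u ∩ A)) [v, u] where
  ne_nil := by simp
  nodup := by simp [huv.ne]
  length_le := by simp
  chordFree _ _ _ hj h := by simp at hj; omega
  mem := by simp [hu, hv, huv.symm]
  neighborFinset_inter_subset := by
    simp only [List.mem_cons, List.not_mem_nil, or_false, forall_eq_or_imp, forall_eq]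
    exact ⟨hsub, Finset.subset_insert _ _⟩
  card_le := by
    have := Finset.card_insert_le u (G.neighborFinset u ∩ A)
    simp only [List.length_cons, List.length_nil]
    omega

theorem isGreedyPiece_path3 {A : Finset V} {w x y z : V} (hyz : y ≠ z) (hnadj : ¬ G.Adj y z)
    (hxN : G.neighborFinset x ∩ A = {y, z}) (hyN : G.neighborFinset y ∩ A = {x, w})
    (hzN : G.neighborFinset z ∩ A = {x, w}) :
    IsGreedyPiece G A {w, y, x, z} [y, x, z] := by
  have hxy := mem_neighborFinset_inter.1 (hxN ▸ by simp : y ∈ G.neighborFinset x ∩ A)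
  have hxz := mem_neighborFinset_inter.1 (hxN ▸ by simp : z ∈ G.neighborFinset x ∩ A)
  have hx := (mem_neighborFinset_inter.1 (hyN ▸ by simp : x ∈ G.neighborFinset y ∩ A)).2
  refine ⟨by simp, by simp [hxz.1.ne, hyz, hxy.1.ne.symm], by simp, ?_, ?_, ?_, ?_⟩
  · intro i j hi hj hij
    simp only [List.length_cons, List.length_nil] at hj
    have : i < j := by omega
    interval_cases j <;> interval_cases i <;> first | omega | simpa
  · simp [hx, hxy.2, hxz.2]
  · simp [hxN, hyN, hzN, Finset.insert_subset_iff]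
  · have := Finset.card_le_four (a := w) (b := y) (c := x) (d := z)
    simp only [List.length_cons, List.length_nil]
    omega

theorem isGreedyPiece_path4 {A : Finset V} {a a' b c d d' : V} (hac : a ≠ c) (had : a ≠ d)
    (hbd : b ≠ d) (hnac : ¬ G.Adj a c) (hnad : ¬ G.Adj a d) (hnbd : ¬ G.Adj b d)
    (haN : G.neighborFinset a ∩ A = {b, a'}) (hbN : G.neighborFinset b ∩ A = {a, c})
    (hcN : G.neighborFinset c ∩ A = {b, d}) (hdN : G.neighborFinset d ∩ A = {c, d'}) :
    IsGreedyPiece G A {a', a, b, c, d, d'} [a, b, c, d] := by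
  have hba := mem_neighborFinset_inter.1 (hbN ▸ by simp : a ∈ G.neighborFinset b ∩ A)
  have hbc := mem_neighborFinset_inter.1 (hbN ▸ by simp : c ∈ G.neighborFinset b ∩ A)
  have hcb := mem_neighborFinset_inter.1 (hcN ▸ by simp : b ∈ G.neighborFinset c ∩ A)
  have hcd := mem_neighborFinset_inter.1 (hcN ▸ by simp : d ∈ G.neighborFinset c ∩ A)
  refine ⟨by simp, ?_, by simp, ?_, ?_, ?_, ?_⟩
  · simp [hba.1.ne.symm, hac, had, hbc.1.ne, hbd, hcd.1.ne]
  · intro i j hi hj hij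
    simp only [List.length_cons, List.length_nil] at hj
    have : i < j := by omega
    interval_cases j <;> interval_cases i <;> first | omega | simpa
  · simp [hba.2, hbc.2, hcb.2, hcd.2]
  · simp [haN, hbN, hcN, hdN, Finset.insert_subset_iff]
  · have := Finset.card_le_six (a := a') (b := a) (c := b) (d := c) (e := d) (f := d')
    simp only [List.length_cons, List.length_nil]
    omega

theorem exists_isGreedyPiece_of_card_eq_two {A : Finset V}
    (hA : ∀ v ∈ A, (G.neighborFinset v ∩ A).card = 2) {x : V} (hx : x ∈ A) :
    ∃ R l, IsGreedyPiece G A R l := by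
  obtain ⟨y, z, hyz, hxN⟩ := Finset.card_eq_two.1 (hA x hx)
  have hxy := mem_neighborFinset_inter.1 (hxN ▸ by simp : y ∈ G.neighborFinset x ∩ A)
  have hxz := mem_neighborFinset_inter.1 (hxN ▸ by simp : z ∈ G.neighborFinset x ∩ A)
  by_cases hadj : G.Adj y z
  · have hyN : G.neighborFinset y ∩ A = {x, z} :=
      (Finset.eq_of_subset_of_card_le (by simp [Finset.insert_subset_iff, hxy.1.symm, hadj, hx,
        hxz.2]) (by rw [hA y hxy.2, Finset.card_pair hxz.1.ne])).symm
    exact ⟨_, _, isGreedyPiece_edge hx hxy.2 hxy.1 (by simp [hxN, hyN, Finset.subset_iff])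
      (hA y hxy.2).le⟩
  obtain ⟨y', hy'x, hyN⟩ := Finset.exists_eq_pair_of_card_eq_two (hA y hxy.2)
    (mem_neighborFinset_inter.2 ⟨hxy.1.symm, hx⟩)
  obtain ⟨z', hz'x, hzN⟩ := Finset.exists_eq_pair_of_card_eq_two (hA z hxz.2)
    (mem_neighborFinset_inter.2 ⟨hxz.1.symm, hx⟩)
  by_cases hy'z' : y' = z'
  · subst hy'z'
    exact ⟨_, _, isGreedyPiece_path3 hyz hadj hxN hyN hzN⟩
  have hyy' := mem_neighborFinset_inter.1 (hyN ▸ by simp : y' ∈ G.neighborFinset y ∩ A)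
  obtain ⟨y'', -, hy'N⟩ := Finset.exists_eq_pair_of_card_eq_two (hA y' hyy'.2)
    (mem_neighborFinset_inter.2 ⟨hyy'.1.symm, hxy.2⟩)
  have hy'z : y' ≠ z := by rintro rfl; exact hadj hyy'.1
  have hy'xN : ¬ G.Adj y' x := fun h => by
    have := mem_neighborFinset_inter.2 ⟨h.symm, hyy'.2⟩
    rw [hxN, Finset.mem_insert, Finset.mem_singleton] at this
    exact this.elim (fun h => G.irrefl (h ▸ hyy'.1)) hy'z
  have hy'zN : ¬ G.Adj y' z := fun h => by
    have := mem_neighborFinset_inter.2 ⟨h.symm, hyy'.2⟩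
    rw [hzN, Finset.mem_insert, Finset.mem_singleton] at this
    exact this.elim hy'x hy'z'
  exact ⟨_, _, isGreedyPiece_path4 hy'x hy'z hyz hy'xN hy'zN hadj hy'N
    (by rw [hyN, Finset.pair_comm]) hxN hzN⟩

theorem exists_isGreedyPiece {A : Finset V}
    (hA : ∀ v ∈ A, (G.neighborFinset v ∩ A).card ≤ 2) (hne : A.Nonempty) :
    ∃ R l, IsGreedyPiece G A R l := by
  by_cases h0 : ∃ v ∈ A, (G.neighborFinset v ∩ A).card = 0
  · obtain ⟨v, hv, h⟩ := h0
    exact ⟨_, _, isGreedyPiece_singleton hv (Finset.card_eq_zero.1 h)⟩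
  by_cases h1 : ∃ v ∈ A, (G.neighborFinset v ∩ A).card = 1
  · obtain ⟨v, hv, h⟩ := h1
    obtain ⟨u, hvN⟩ := Finset.card_eq_one.1 h
    have hvu := mem_neighborFinset_inter.1 (hvN ▸ Finset.mem_singleton_self u)
    exact ⟨_, _, isGreedyPiece_edge hv hvu.2 hvu.1 (by simp [hvN]) (hA u hvu.2)⟩
  push Not at h0 h1
  obtain ⟨x, hx⟩ := hne
  refine exists_isGreedyPiece_of_card_eq_two (fun v hv => ?_) hx
  have := hA v hv; have := h0 v hv; have := h1 v hv
  omega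

theorem exists_blockLayout_of_card_neighborFinset_inter_le_two (A : Finset V)
    (hA : ∀ v ∈ A, (G.neighborFinset v ∩ A).card ≤ 2) :
    ∃ T ⊆ A, ∃ π : V → ℕ, IsBlockLayout G 3 T π ∧ 2 * A.card ≤ 3 * T.card := by
  induction A using Finset.strongInduction with
  | H A ih =>
  rcases A.eq_empty_or_nonempty with rfl | hne
  · exact ⟨∅, subset_refl _, fun _ => 0, by simp [IsBlockLayout], by simp⟩
  obtain ⟨R, l, hl⟩ := exists_isGreedyPiece hA hne
  obtain ⟨x, hx⟩ := List.exists_mem_of_ne_nil l hl.ne_nil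
  have hsub : A \ R ⊂ A := (Finset.ssubset_iff_of_subset Finset.sdiff_subset).2
    ⟨x, (hl.mem x hx).1, fun h => (Finset.mem_sdiff.1 h).2 (hl.mem x hx).2⟩
  obtain ⟨T, hT, π, hπ, hcard⟩ := ih _ hsub fun v hv =>
    (Finset.card_le_card (Finset.inter_subset_inter (subset_refl _) Finset.sdiff_subset)).trans
      (hA v (Finset.mem_sdiff.1 hv).1)
  exact hl.exists_blockLayout hT hπ hcard

theorem isLinearForest_induce_of_card_neighborFinset_inter_le_one {A : Finset V} (hk : 1 ≤ k)
    (hA : ∀ v ∈ A, (G.neighborFinset v ∩ A).card ≤ 1) :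
    (G.induce (A : Set V)).IsLinearForest k :=
  isLinearForest_of_adj_eq hk fun v a b ha hb => Subtype.ext <|
    Finset.card_le_one.1 (hA v (Finset.mem_coe.1 v.2)) a (mem_neighborFinset_inter.2 ⟨ha, a.2⟩)
      b (mem_neighborFinset_inter.2 ⟨hb, b.2⟩)

theorem exists_isLinearForest_induce_three {A : Finset V} {d : ℕ} (hd : d = 1 ∨ d = 2)
    (hA : ∀ v ∈ A, (G.neighborFinset v ∩ A).card ≤ d) :
    ∃ T : Finset V, (G.induce (T : Set V)).IsLinearForest 3 ∧
      2 * A.card ≤ (d + 1) * T.card := by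
  rcases hd with rfl | rfl
  · exact ⟨A, isLinearForest_induce_of_card_neighborFinset_inter_le_one (by norm_num) hA,
      le_rfl⟩
  · obtain ⟨T, -, π, hπ, hcard⟩ :=
      exists_blockLayout_of_card_neighborFinset_inter_le_two A hA
    exact ⟨T, hπ.isLinearForest, hcard⟩

end Greedy

section Partition

variable [Fintype V] [DecidableRel G.Adj] {ι : Type*} [DecidableEq ι]

theorem natCast_card_filter_neighborFinset (c : V → ι) (u : V) (i : ι) :
    (((G.neighborFinset u).filter fun w => c w = i).card : ℤ) =
      ∑ w, if G.Adj u w ∧ c w = i then 1 else 0 := by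
  rw [Finset.card_filter, neighborFinset_eq_filter, Finset.sum_filter]
  push_cast
  simp [ite_and]

theorem sum_card_filter_neighborFinset_update [Fintype ι] [DecidableEq V] (c : V → ι) (v : V)
    (j : ι) :
    ∑ u, (((G.neighborFinset u).filter
        fun w => Function.update c v j w = Function.update c v j u).card : ℤ) =
      ∑ u, (((G.neighborFinset u).filter fun w => c w = c u).card : ℤ) +
        2 * ((((G.neighborFinset v).filter fun w => c w = j).card : ℤ) -
          ((G.neighborFinset v).filter fun w => c w = c v).card) := by
  set c' := Function.update c v j
  -- only the ordered pairs through `v` change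
  let h : V → ℤ := fun w =>
    (if G.Adj v w ∧ c w = j then 1 else 0) - if G.Adj v w ∧ c w = c v then 1 else 0
  have key : ∀ u w, (if G.Adj u w ∧ c' w = c' u then (1 : ℤ) else 0) =
      (if G.Adj u w ∧ c w = c u then 1 else 0) + ((if u = v then h w else 0) +
        if w = v then h u else 0) := by
    intro u w
    by_cases hu : u = v <;> by_cases hw : w = v
    · subst hu hw; simp [h]
    · subst hu; simp [c', h, hw]
    · subst hw; simp [c', h, hu, G.adj_comm, eq_comm]
    · simp [c', h, hu, hw]
  simp only [natCast_card_filter_neighborFinset, key, Finset.sum_add_distrib,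
    Finset.sum_ite_irrel, Finset.sum_const_zero, Finset.sum_ite_eq', Finset.mem_univ, if_true, h,
    Finset.sum_sub_distrib]
  ring

/-- Lovász: take a colouring minimising `#monochromatic edges - ∑ u, d (c u)`. A vertex `v` with
more than `d (c v)` neighbours of its colour sees some colour `j` at most `d j` times, and moving
`v` to `j` would decrease the potential. -/
theorem exists_coloring_card_filter_neighborFinset_le [Fintype ι] [Nonempty ι] (d : ι → ℕ)
    (hdeg : ∀ v, G.degree v < ∑ i, (d i + 1)) :
    ∃ c : V → ι, ∀ v, ((G.neighborFinset v).filter fun w => c w = c v).card ≤ d (c v) := by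
  classical
  let Φ : (V → ι) → ℤ := fun c =>
    ∑ u, (((G.neighborFinset u).filter fun w => c w = c u).card : ℤ) -
      2 * ∑ u, (d (c u) : ℤ)
  obtain ⟨c, -, hmin⟩ := Finset.univ.exists_min_image Φ Finset.univ_nonempty
  refine ⟨c, fun v => ?_⟩
  by_contra! hv
  obtain ⟨j, hj⟩ : ∃ j, ((G.neighborFinset v).filter fun w => c w = j).card ≤ d j := by
    by_contra! h
    have := Finset.sum_le_sum fun j (_ : j ∈ Finset.univ) => Nat.succ_le_of_lt (h j)
    rw [← Finset.card_eq_sum_card_fiberwise fun w _ => Finset.mem_univ (c w),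
      card_neighborFinset_eq_degree] at this
    exact (hdeg v).not_ge this
  have := hmin (Function.update c v j) (Finset.mem_univ _)
  simp only [Φ, sum_card_filter_neighborFinset_update,
    Fintype.sum_apply_update (fun i => (d i : ℤ))] at this
  omega

end Partition

end SimpleGraph

theorem exists_capacities {Δ : ℕ} (hΔ : 0 < Δ) :
    ∃ m, ∃ d : Fin (m + 1) → ℕ, (∀ i, d i = 1 ∨ d i = 2) ∧
      ∑ i, (d i + 1) = Δ + 1 := by
  obtain ⟨m, rfl | rfl⟩ := Nat.even_or_odd' Δ
  · obtain ⟨m, rfl⟩ : ∃ m', m = m' + 1 := ⟨m - 1, by omega⟩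
    refine ⟨m, Fin.cons 2 fun _ => 1, fun i => Fin.cases (by simp) (by simp) i, ?_⟩
    simp [Fin.sum_univ_succ]
    ring
  · exact ⟨m, fun _ => 1, by simp, by simp; ring⟩

open SimpleGraph in
/-- **Lower bound on maximum induced linear 3-forests in regular graphs.**
If `Δ > 0` and `G` is a finite simple `Δ`-regular graph of order `n`, then `G` has an
induced linear `3`-forest on at least `2n/(Δ + 1)` vertices. -/
theorem linear_three_forest_regular {V : Type*} [Fintype V]
    (G : SimpleGraph V) [DecidableRel G.Adj]
    (Δ : ℕ) (hΔpos : 0 < Δ) (hreg : G.IsRegularOfDegree Δ)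
    (n : ℕ) (hn : n = Fintype.card V) :
    ∃ S : Finset V, (G.induce (S : Set V)).IsLinearForest 3 ∧
      2 * (n : ℝ) / (Δ + 1) ≤ (S.card : ℝ) := by
  classical
  obtain ⟨m, d, hd, hsum⟩ := exists_capacities hΔpos
  obtain ⟨c, hc⟩ := G.exists_coloring_card_filter_neighborFinset_le d fun v => by
    rw [hreg v, hsum]; omega
  let A : Fin (m + 1) → Finset V := fun i => Finset.univ.filter fun v => c v = i
  have hA : ∀ i, ∃ T : Finset V, (G.induce (T : Set V)).IsLinearForest 3 ∧
      2 * (A i).card ≤ (d i + 1) * T.card := fun i =>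
    exists_isLinearForest_induce_three (hd i) fun v hv => by
      obtain rfl : c v = i := (Finset.mem_filter.1 hv).2
      convert hc v using 2
      ext
      simp [A]
  choose T hT hTcard using hA
  obtain ⟨i, -, hi⟩ := Finset.univ.exists_max_image (fun i => (T i).card) Finset.univ_nonempty
  have key : 2 * n ≤ (Δ + 1) * (T i).card := calc
    2 * n = ∑ j, 2 * (A j).card := by
      rw [← Finset.mul_sum, hn, ← Finset.card_univ,
        Finset.card_eq_sum_card_fiberwise fun v _ => Finset.mem_univ (c v)]
    _ ≤ ∑ j, (d j + 1) * (T j).card := Finset.sum_le_sum fun j _ => hTcard j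
    _ ≤ ∑ j, (d j + 1) * (T i).card :=
      Finset.sum_le_sum fun j _ => Nat.mul_le_mul_left _ (hi j (Finset.mem_univ j))
    _ = (Δ + 1) * (T i).card := by rw [← Finset.sum_mul, hsum]
  refine ⟨T i, hT i, ?_⟩
  rw [div_le_iff₀ (by positivity)]
  exact_mod_cast (by linarith : 2 * n ≤ (T i).card * (Δ + 1))
end

section
/- Let f(d) = min(1, 3/(d+2)) for nonnegative integers d. Let Δ ≥ 5 be an integer and let d, q be integers with 2 ≤ d ≤ Δ and 0 ≤ q ≤ d. Then f(d − q) − f(d) ≥ q · ( f(Δ−1) − f(Δ) ). -/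
/-- **Technical lemma for the triangle-free bound (Lemma 2.1).**
Let `f(d) = min(1, 3/(d+2))`. For integers `Δ ≥ 5`, `2 ≤ d ≤ Δ` and `0 ≤ q ≤ d`,
we have `f(d−q) − f(d) ≥ q·(f(Δ−1) − f(Δ))`. -/
theorem potential_technical_lemma_one
    (f : ℕ → ℚ) (hf : ∀ d : ℕ, f d = min 1 (3 / ((d : ℚ) + 2)))
    (Δ d q : ℕ) (hΔ : 5 ≤ Δ) (hd2 : 2 ≤ d) (hdΔ : d ≤ Δ) (hq : q ≤ d) :
    (q : ℚ) * (f (Δ - 1) - f Δ) ≤ f (d - q) - f d := by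
  set L : ℚ := (Δ : ℚ) with hLdef
  set D : ℚ := (d : ℚ) with hDdef
  set Q : ℚ := (q : ℚ) with hQdef
  have hL : (5:ℚ) ≤ L := by rw [hLdef]; exact_mod_cast hΔ
  have hD : (2:ℚ) ≤ D := by rw [hDdef]; exact_mod_cast hd2
  have hDL : D ≤ L := by rw [hDdef, hLdef]; exact_mod_cast hdΔ
  have hQD : Q ≤ D := by rw [hQdef, hDdef]; exact_mod_cast hq
  have hQ0 : (0:ℚ) ≤ Q := Nat.cast_nonneg q
  have hfd : f d = 3 / (D + 2) := by
    rw [hf]; exact min_eq_right (by rw [div_le_one (by linarith)]; linarith)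
  have hfΔ : f Δ = 3 / (L + 2) := by
    rw [hf]; exact min_eq_right (by rw [div_le_one (by linarith)]; linarith)
  have hcast : ((Δ - 1 : ℕ) : ℚ) = L - 1 := by
    have h1 : 1 ≤ Δ := by omega
    push_cast [Nat.cast_sub h1]; ring
  have hfΔ1 : f (Δ - 1) = 3 / (L + 1) := by
    rw [hf, hcast]
    have : L - 1 + 2 = L + 1 := by ring
    rw [this]
    exact min_eq_right (by rw [div_le_one (by linarith)]; linarith)
  have hL1 : (0:ℚ) < L + 1 := by linarith
  have hL2 : (0:ℚ) < L + 2 := by linarith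
  have hD2 : (0:ℚ) < D + 2 := by linarith
  rw [hfd, hfΔ, hfΔ1]
  have hdiff : 3 / (L + 1) - 3 / (L + 2) = 3 / ((L + 1) * (L + 2)) := by
    field_simp; ring
  rw [hdiff]
  by_cases hqd : q = d
  · -- q = d, so d - q = 0 and f 0 = 1
    have h0 : d - q = 0 := by omega
    have hQeq : Q = D := by rw [hQdef, hDdef, hqd]
    have hf0 : f (d - q) = 1 := by
      rw [h0, hf]
      exact min_eq_left (by norm_num)
    rw [hf0, hQeq]
    have hrhs : (1:ℚ) - 3 / (D + 2) = (D - 1) / (D + 2) := by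
      field_simp; ring
    rw [hrhs, mul_comm, div_mul_eq_mul_div,
      div_le_div_iff₀ (by positivity) hD2]
    have h1 : (0:ℚ) ≤ (L + 2) * ((D - 2) * (L - 2)) :=
      mul_nonneg (by linarith) (mul_nonneg (by linarith) (by linarith))
    have h2 : (0:ℚ) ≤ (L + 2) * (L - 5) := mul_nonneg (by linarith) (by linarith)
    have h3 : (0:ℚ) ≤ D * (L - D) := mul_nonneg (by linarith) (by linarith)
    have key : (D - 1) * ((L + 1) * (L + 2)) - D * 3 * (D + 2) =
        (L + 2) * ((D - 2) * (L - 2)) + (L + 2) * (L - 5) + 3 * (D * (L - D)) := by ring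
    linarith
  · -- q < d, so d - q ≥ 1
    have h1le : 1 ≤ d - q := by omega
    have hcast2 : ((d - q : ℕ) : ℚ) = D - Q := by
      push_cast [Nat.cast_sub hq]; ring
    have hDQ1 : (1:ℚ) ≤ D - Q := by
      rw [← hcast2]; exact_mod_cast h1le
    have hfdq : f (d - q) = 3 / (D - Q + 2) := by
      rw [hf, hcast2]
      exact min_eq_right (by rw [div_le_one (by linarith)]; linarith)
    rw [hfdq]
    have hDQ2 : (0:ℚ) < D - Q + 2 := by linarith
    have hdiff2 : 3 / (D - Q + 2) - 3 / (D + 2) = 3 * Q / ((D - Q + 2) * (D + 2)) := by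
      field_simp; ring
    rw [hdiff2, mul_comm, div_mul_eq_mul_div,
      div_le_div_iff₀ (by positivity) (by positivity)]
    have hQQ : (0:ℚ) ≤ Q * (Q - 1) := by
      rcases Nat.eq_zero_or_pos q with h | h
      · simp [hQdef, h]
      · have : (1:ℚ) ≤ Q := by rw [hQdef]; exact_mod_cast h
        exact mul_nonneg hQ0 (by linarith)
    have h1 : (0:ℚ) ≤ Q * (L - D) * (L + D + 3) :=
      mul_nonneg (mul_nonneg hQ0 (by linarith)) (by linarith)
    have h2 : (0:ℚ) ≤ Q * (Q - 1) * (D + 2) := mul_nonneg hQQ (by linarith)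
    have key : 3 * Q * ((L + 1) * (L + 2)) - 3 * Q * ((D - Q + 2) * (D + 2)) =
        3 * (Q * (L - D) * (L + D + 3)) + 3 * (Q * (Q - 1) * (D + 2)) := by ring
    linarith
end

section
/- Let f(d) = min(1, 3/(d+2)) for nonnegative integers d. Let Δ ≥ 5 be an integer and let d, q be integers with 2 ≤ d < Δ and 0 ≤ q ≤ d. Then f(d − q) − f(d) ≥ q · ( f(Δ−2) − f(Δ−1) ). -/
lemma f_eq_aux (f : ℕ → ℚ) (hf : ∀ d : ℕ, f d = min 1 (3 / ((d : ℚ) + 2)))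
    (n : ℕ) (hn : 1 ≤ n) : f n = 3 / ((n : ℚ) + 2) := by
  rw [hf, min_eq_right]
  rw [div_le_one (by positivity)]
  have : (1:ℚ) ≤ n := by exact_mod_cast hn
  linarith

/-- **Technical lemma for the triangle-free bound (Lemma 2.2).**
Let `f(d) = min(1, 3/(d+2))`. For integers `Δ ≥ 5`, `2 ≤ d < Δ` and `0 ≤ q ≤ d`,
we have `f(d−q) − f(d) ≥ q·(f(Δ−2) − f(Δ−1))`. -/
theorem potential_technical_lemma_two
    (f : ℕ → ℚ) (hf : ∀ d : ℕ, f d = min 1 (3 / ((d : ℚ) + 2)))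
    (Δ d q : ℕ) (hΔ : 5 ≤ Δ) (hd2 : 2 ≤ d) (hdΔ : d < Δ) (hq : q ≤ d) :
    (q : ℚ) * (f (Δ - 2) - f (Δ - 1)) ≤ f (d - q) - f d := by
  have hD : (5:ℚ) ≤ (Δ:ℚ) := by exact_mod_cast hΔ
  have hdD : (d:ℚ) + 1 ≤ (Δ:ℚ) := by exact_mod_cast hdΔ
  have hd2' : (2:ℚ) ≤ (d:ℚ) := by exact_mod_cast hd2
  have hq' : (q:ℚ) ≤ (d:ℚ) := by exact_mod_cast hq
  have hq0 : (0:ℚ) ≤ (q:ℚ) := by positivity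
  have h1 : f (Δ - 2) = 3 / ((Δ:ℚ)) := by
    rw [f_eq_aux f hf _ (by omega)]
    have : ((Δ - 2 : ℕ) : ℚ) = (Δ:ℚ) - 2 := by
      have : (2:ℕ) ≤ Δ := by omega
      push_cast [this]; ring
    rw [this]; ring_nf
  have h2 : f (Δ - 1) = 3 / ((Δ:ℚ) + 1) := by
    rw [f_eq_aux f hf _ (by omega)]
    have : ((Δ - 1 : ℕ) : ℚ) = (Δ:ℚ) - 1 := by
      have : (1:ℕ) ≤ Δ := by omega
      push_cast [this]; ring
    rw [this]; ring_nf
  have h3 : f d = 3 / ((d:ℚ) + 2) := f_eq_aux f hf d (by omega)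
  rw [h1, h2, h3]
  rcases eq_or_lt_of_le hq with rfl | hlt
  · -- q = d, f 0 = 1
    have h4 : f (q - q) = 1 := by
      simp [hf]
      norm_num
    rw [h4]
    rw [div_sub_div _ _ (by linarith) (by linarith)]
    have e1 : (1:ℚ) - 3 / ((q:ℚ) + 2) = ((q:ℚ) - 1) / ((q:ℚ) + 2) := by
      field_simp; ring
    rw [e1, ← mul_div_assoc, div_le_div_iff₀ (by nlinarith) (by linarith)]
    nlinarith [mul_nonneg (mul_nonneg (by linarith : (0:ℚ) ≤ (q:ℚ) - 1) (by linarith : (0:ℚ) ≤ (Δ:ℚ) - 5)) (by linarith : (0:ℚ) ≤ (Δ:ℚ) - (q:ℚ) - 1),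
      mul_nonneg (mul_nonneg (by linarith : (0:ℚ) ≤ (q:ℚ) - 2) (by linarith : (0:ℚ) ≤ (Δ:ℚ) - 5)) (by linarith : (0:ℚ) ≤ (Δ:ℚ) + 1),
      mul_nonneg (mul_nonneg (by linarith : (0:ℚ) ≤ (q:ℚ) - 2) (by linarith : (0:ℚ) ≤ (Δ:ℚ) - (q:ℚ) - 1)) (by linarith : (0:ℚ) ≤ (Δ:ℚ) + 1),
      mul_nonneg (by linarith : (0:ℚ) ≤ (Δ:ℚ) - 5) (by linarith : (0:ℚ) ≤ (Δ:ℚ) - (q:ℚ) - 1),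
      mul_nonneg (by linarith : (0:ℚ) ≤ (q:ℚ) - 2) (by linarith : (0:ℚ) ≤ (Δ:ℚ) - 5)]
  · -- d - q ≥ 1
    have h5 : f (d - q) = 3 / ((d:ℚ) - (q:ℚ) + 2) := by
      rw [f_eq_aux f hf _ (by omega)]
      have : ((d - q : ℕ) : ℚ) = (d:ℚ) - (q:ℚ) := by
        push_cast [hq]; ring
      rw [this]
    rw [h5]
    have hlt' : (q:ℚ) < (d:ℚ) := by exact_mod_cast hlt
    rw [div_sub_div _ _ (by linarith) (by linarith),
        div_sub_div _ _ (by linarith) (by linarith)]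
    have hq1 : (0:ℚ) ≤ (q:ℚ) * ((q:ℚ) - 1) := by
      rcases Nat.eq_zero_or_pos q with h | h
      · simp [h]
      · have : (1:ℚ) ≤ (q:ℚ) := by exact_mod_cast h
        nlinarith
    rw [← mul_div_assoc, div_le_div_iff₀ (by nlinarith) (by nlinarith)]
    nlinarith [mul_nonneg (mul_nonneg hq0 (by linarith : (0:ℚ) ≤ (Δ:ℚ) - (d:ℚ) - 1)) (by linarith : (0:ℚ) ≤ (Δ:ℚ) + 1),
      mul_nonneg (mul_nonneg hq0 (by linarith : (0:ℚ) ≤ (d:ℚ) + 1)) (by linarith : (0:ℚ) ≤ (Δ:ℚ) - (d:ℚ) - 1),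
      mul_nonneg hq1 (by linarith : (0:ℚ) ≤ (d:ℚ) + 2)]
end

section
/- Every finite simple triangle-free 4-regular graph on exactly 10 vertices contains a set of 6 vertices inducing a forest; that is, a(G) ≥ 6 for every such graph G. -/
/-!
Pick a vertex `v`. As `G` is triangle-free, its neighbourhood `N(v)` is independent, and a
`d`-regular graph on more than `2d` vertices has an edge `xy` avoiding `N(v)`: otherwise every
vertex outside `N(v)` would have neighbourhood exactly `N(v)`, giving each vertex of `N(v)`
more than `d` neighbours. By triangle-freeness again, no vertex of `N(v)` sees both `x` and `y`,
so in `N(v) ∪ {x, y}` every vertex other than `x` and `y` has at most one neighbour. Such a graph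
is a forest, because a cycle has three distinct vertices, each with two neighbours on the cycle.
-/

open Finset

namespace SimpleGraph

variable {V : Type*} {G : SimpleGraph V}

lemma Walk.IsCycle.exists_adj_adj_ne {u a : V} {c : G.Walk u u} (hc : c.IsCycle)
    (ha : a ∈ c.support) : ∃ b₁ b₂, b₁ ≠ b₂ ∧ G.Adj a b₁ ∧ G.Adj a b₂ := by
  classical
  have hc' := hc.rotate ha
  exact ⟨_, _, hc'.snd_ne_penultimate, (c.rotate a ha).adj_snd hc'.not_nil,
    ((c.rotate a ha).adj_penultimate hc'.not_nil).symm⟩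

lemma Walk.IsCycle.exists_mem_support_ne_ne {u : V} {c : G.Walk u u} (hc : c.IsCycle)
    (x y : V) : ∃ a ∈ c.support, a ≠ x ∧ a ≠ y := by
  have hsnd : u ≠ c.snd := (c.adj_snd hc.not_nil).ne
  have hpen : c.penultimate ≠ u := (c.adj_penultimate hc.not_nil).ne
  have hsp := hc.snd_ne_penultimate
  by_contra! hall
  have hu := hall u c.start_mem_support
  have hs := hall c.snd (c.getVert_mem_support 1)
  have hp := hall c.penultimate (c.getVert_mem_support _)
  by_cases hux : u = x <;> by_cases hsx : c.snd = x <;> grind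

lemma isAcyclic_of_neighborSet_subsingleton {x y : V}
    (h : ∀ a, a ≠ x → a ≠ y → (G.neighborSet a).Subsingleton) : G.IsAcyclic := by
  intro u c hc
  obtain ⟨a, ha, hax, hay⟩ := hc.exists_mem_support_ne_ne x y
  obtain ⟨b₁, b₂, hne, h₁, h₂⟩ := hc.exists_adj_adj_ne ha
  exact hne (h a hax hay h₁ h₂)

lemma isAcyclic_induce_insert_insert_neighborSet (hG : G.CliqueFree 3) (v : V) {x y : V}
    (hxy : G.Adj x y) : (G.induce (insert x (insert y (G.neighborSet v)))).IsAcyclic := by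
  refine isAcyclic_of_neighborSet_subsingleton (x := ⟨x, by simp⟩) (y := ⟨y, by simp⟩) ?_
  rintro ⟨a, ha⟩ hax hay
  have hav : a ∈ G.neighborSet v := by grind
  have hnbr : ∀ b : ↑(insert x (insert y (G.neighborSet v))), G.Adj a b → b.1 = x ∨ b.1 = y :=
    fun ⟨b, hb⟩ hab => by
      rcases hb with rfl | rfl | hbv
      · exact .inl rfl
      · exact .inr rfl
      · exact absurd hab (G.isIndepSet_neighborSet_of_triangleFree hG v hav hbv hab.ne)
  have hxy' : ¬(G.Adj a x ∧ G.Adj a y) := fun ⟨hx, hy⟩ =>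
    G.isIndepSet_neighborSet_of_triangleFree hG a hx hy hxy.ne hxy
  intro b₁ (hb₁ : G.Adj a b₁) b₂ (hb₂ : G.Adj a b₂)
  apply Subtype.ext
  rcases hnbr b₁ hb₁ with h₁ | h₁ <;> rcases hnbr b₂ hb₂ with h₂ | h₂ <;> grind

lemma IsRegularOfDegree.exists_adj_notMem_neighborFinset [Fintype V] [DecidableRel G.Adj]
    {d : ℕ} (hreg : G.IsRegularOfDegree d) (hd : 0 < d) (hcard : 2 * d < Fintype.card V)
    (v : V) : ∃ x y, x ∉ G.neighborFinset v ∧ y ∉ G.neighborFinset v ∧ G.Adj x y := by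
  classical
  by_contra! hno
  have hsub : ∀ u ∉ G.neighborFinset v, G.neighborFinset u = G.neighborFinset v :=
    fun u hu => eq_of_subset_of_card_le
      (fun b hb => by_contra fun hbv => hno u b hu hbv ((G.mem_neighborFinset _ _).1 hb))
      (by rw [card_neighborFinset_eq_degree, card_neighborFinset_eq_degree, hreg u, hreg v])
  obtain ⟨a, ha⟩ : (G.neighborFinset v).Nonempty := by
    rw [← card_pos, card_neighborFinset_eq_degree, hreg v]
    exact hd
  have hcompl : (G.neighborFinset v)ᶜ ⊆ G.neighborFinset a := fun u hu => by
    rw [mem_compl] at hu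
    rw [mem_neighborFinset, adj_comm, ← mem_neighborFinset, hsub u hu]
    exact ha
  have hle := card_le_card hcompl
  rw [card_compl, card_neighborFinset_eq_degree, card_neighborFinset_eq_degree, hreg v,
    hreg a] at hle
  omega

theorem exists_isAcyclic_induce_card_eq_add_two [Fintype V] [DecidableRel G.Adj] {d : ℕ}
    (hG : G.CliqueFree 3) (hreg : G.IsRegularOfDegree d) (hd : 0 < d)
    (hcard : 2 * d < Fintype.card V) :
    ∃ S : Finset V, (G.induce (S : Set V)).IsAcyclic ∧ S.card = d + 2 := by
  classical
  obtain ⟨v⟩ : Nonempty V := Fintype.card_pos_iff.1 (by omega)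
  obtain ⟨x, y, hx, hy, hxy⟩ := hreg.exists_adj_notMem_neighborFinset hd hcard v
  refine ⟨insert x (insert y (G.neighborFinset v)), ?_, ?_⟩
  · rw [coe_insert, coe_insert, coe_neighborFinset]
    exact isAcyclic_induce_insert_insert_neighborSet hG v hxy
  · have hxy' : x ∉ insert y (G.neighborFinset v) := by simp [hxy.ne, hx]
    rw [card_insert_of_notMem hxy', card_insert_of_notMem hy, card_neighborFinset_eq_degree,
      hreg v]

end SimpleGraph

/-- **Triangle-free 4-regular graphs on 10 vertices have an induced forest on 6 vertices.**
Every finite simple triangle-free `4`-regular graph on exactly `10` vertices contains a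
set of `6` vertices inducing a forest, i.e. `a(G) ≥ 6` for every such graph. -/
theorem acyclic_set_six_of_triangle_free_four_regular_ten {V : Type*} [Fintype V]
    (G : SimpleGraph V) [DecidableRel G.Adj] (hG : G.CliqueFree 3)
    (hreg : G.IsRegularOfDegree 4) (hcard : Fintype.card V = 10) :
    ∃ S : Finset V, (G.induce (S : Set V)).IsAcyclic ∧ 6 ≤ S.card := by
  obtain ⟨S, hS, hcardS⟩ :=
    SimpleGraph.exists_isAcyclic_induce_card_eq_add_two hG hreg (by norm_num) (by omega)
  exact ⟨S, hS, hcardS.ge⟩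
end
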